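/- arXiv:1702.08898 — 3 statements merged into one kernel-verified Lean document; each statement's English description precedes it below -/
import Mathlib

section
/- The kinky inference predictor x ↦ (1/2) min_{i=1..N}(ỹ_i + 𝔡(x, s_i)) + (1/2) max_{i=1..N}(ỹ_i − 𝔡(x, s_i)) is Lipschitz continuous with constant 1 with respect to the pseudo-metric 𝔡, i.e., |p(x) − p(x')| ≤ 𝔡(x, x') for all x, x'. -/
/-! The ceiling and the floor are each 1-Lipschitz: they are a finite infimum, resp. supremum,
of functions `x ↦ ỹᵢ ± 𝔡(x, sᵢ)`, each 1-Lipschitz by the triangle inequality, and a finite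
infimum or supremum of functions differing pointwise by at most `c` differ by at most `c`.
The predictor is their average. -/

section FiniteExtrema

variable {ι : Type*} [Finite ι] [Nonempty ι] {f g : ι → ℝ} {c : ℝ}

theorem ciSup_le_ciSup_add (h : ∀ i, f i ≤ g i + c) : ⨆ i, f i ≤ (⨆ i, g i) + c :=
  ciSup_le fun i => (h i).trans (add_le_add_left (le_ciSup (Set.finite_range g).bddAbove i) c)

theorem ciInf_le_ciInf_add (h : ∀ i, f i ≤ g i + c) : ⨅ i, f i ≤ (⨅ i, g i) + c :=
  sub_le_iff_le_add.mp <| le_ciInf fun i =>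
    sub_le_iff_le_add.mpr <| (ciInf_le (Set.finite_range f).bddBelow i).trans (h i)

theorem abs_ciSup_sub_ciSup_le (h : ∀ i, |f i - g i| ≤ c) : |(⨆ i, f i) - ⨆ i, g i| ≤ c := by
  rw [abs_sub_le_iff, sub_le_iff_le_add', sub_le_iff_le_add']
  exact ⟨ciSup_le_ciSup_add fun i => by linarith [abs_sub_le_iff.mp (h i)],
    ciSup_le_ciSup_add fun i => by linarith [abs_sub_le_iff.mp (h i)]⟩

theorem abs_ciInf_sub_ciInf_le (h : ∀ i, |f i - g i| ≤ c) : |(⨅ i, f i) - ⨅ i, g i| ≤ c := by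
  rw [abs_sub_le_iff, sub_le_iff_le_add', sub_le_iff_le_add']
  exact ⟨ciInf_le_ciInf_add fun i => by linarith [abs_sub_le_iff.mp (h i)],
    ciInf_le_ciInf_add fun i => by linarith [abs_sub_le_iff.mp (h i)]⟩

end FiniteExtrema

theorem abs_sub_le_of_symm_of_triangle {X : Type*} {d : X → X → ℝ} (hdsymm : ∀ x y, d x y = d y x)
    (hdtri : ∀ x y z, d x z ≤ d x y + d y z) (x x' z : X) : |d x z - d x' z| ≤ d x x' := by
  rw [abs_sub_le_iff]
  constructor
  · linarith [hdtri x x' z]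
  · linarith [hdtri x' x z, hdsymm x x']

theorem kinky_inference_lipschitz_general {X : Type*} {ι : Type*} [Fintype ι] [Nonempty ι]
    (d : X → X → ℝ) (hdsymm : ∀ x y, d x y = d y x)
    (hdtri : ∀ x y z, d x z ≤ d x y + d y z)
    (s : ι → X) (y : ι → ℝ) :
    ∀ x x' : X,
      |((⨅ i, (y i + d x (s i))) + (⨆ i, (y i - d x (s i)))) / 2 -
        ((⨅ i, (y i + d x' (s i))) + (⨆ i, (y i - d x' (s i)))) / 2| ≤ d x x' := by
  intro x x'
  have hdist := abs_sub_le_of_symm_of_triangle hdsymm hdtri x x'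
  have hceil : |(⨅ i, (y i + d x (s i))) - ⨅ i, (y i + d x' (s i))| ≤ d x x' :=
    abs_ciInf_sub_ciInf_le fun i => by simpa only [add_sub_add_left_eq_sub] using hdist (s i)
  have hfloor : |(⨆ i, (y i - d x (s i))) - ⨆ i, (y i - d x' (s i))| ≤ d x x' :=
    abs_ciSup_sub_ciSup_le fun i => by
      simpa only [sub_sub_sub_cancel_left, abs_sub_comm] using hdist (s i)
  rw [abs_le] at hceil hfloor ⊢
  constructor <;> linarith [hceil.1, hceil.2, hfloor.1, hfloor.2]

theorem kinky_inference_lipschitz {X : Type*} {ι : Type*} [Fintype ι] [Nonempty ι]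
    (d : X → X → ℝ) (hd0 : ∀ x y, 0 ≤ d x y) (hdsymm : ∀ x y, d x y = d y x)
    (hdtri : ∀ x y z, d x z ≤ d x y + d y z) (hdrefl : ∀ x, d x x = 0)
    (s : ι → X) (y : ι → ℝ) :
    ∀ x x' : X,
      |((⨅ i, (y i + d x (s i))) + (⨆ i, (y i - d x (s i)))) / 2 -
        ((⨅ i, (y i + d x' (s i))) + (⨆ i, (y i - d x' (s i)))) / 2| ≤ d x x' :=
  kinky_inference_lipschitz_general d hdsymm hdtri s y
end

section
/- Suppose the data is generated by a function f : X → ℝ that is 1-Lipschitz with respect to the pseudo-metric 𝔡 (i.e., |f(x) − f(x')| ≤ 𝔡(x,x')), and the observations are noise-free: ỹ_i = f(s_i). Then the kinky inference predictor p satisfies the error bound |p(x) − f(x)| ≤ (1/2)(𝔲(x) − 𝔩(x)) ≤ min_i 𝔡(x, s_i) for all x ∈ X. -/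
theorem kinky_inference_error_bound {X : Type*} {ι : Type*} [Fintype ι] [Nonempty ι]
    (d : X → X → ℝ) (hd0 : ∀ x y, 0 ≤ d x y) (hdsymm : ∀ x y, d x y = d y x)
    (hdtri : ∀ x y z, d x z ≤ d x y + d y z) (hdrefl : ∀ x, d x x = 0)
    (f : X → ℝ) (hf : ∀ x x', |f x - f x'| ≤ d x x')
    (s : ι → X) (y : ι → ℝ) (hy : ∀ i, y i = f (s i)) :
    ∀ x : X,
      |((⨅ i, (y i + d x (s i))) + (⨆ i, (y i - d x (s i)))) / 2 - f x| ≤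
        ((⨅ i, (y i + d x (s i))) - (⨆ i, (y i - d x (s i)))) / 2 ∧
      ((⨅ i, (y i + d x (s i))) - (⨆ i, (y i - d x (s i)))) / 2 ≤ ⨅ i, d x (s i) := by
  intro x
  have hfu : f x ≤ ⨅ i, (y i + d x (s i)) := by
    apply le_ciInf
    intro i
    have := (abs_le.mp (hf x (s i))).2
    rw [hy i]; linarith
  have hlf : (⨆ i, (y i - d x (s i))) ≤ f x := by
    apply ciSup_le
    intro i
    have := (abs_le.mp (hf x (s i))).1
    rw [hy i]; linarith
  have hui : ∀ i, (⨅ i, (y i + d x (s i))) ≤ y i + d x (s i) := fun i =>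
    ciInf_le (Set.Finite.bddBelow (Set.finite_range _)) i
  have hli : ∀ i, y i - d x (s i) ≤ ⨆ i, (y i - d x (s i)) := fun i =>
    le_ciSup (f := fun i => y i - d x (s i)) (Set.Finite.bddAbove (Set.finite_range _)) i
  constructor
  · rw [abs_le]; constructor <;> linarith
  · apply le_ciInf
    intro i
    have h1 := hui i
    have h2 := hli i
    linarith
end

section
/- Suppose observations satisfy ỹ_i = f(s_i) + e_i with |e_i| ≤ ē and f is 1-Lipschitz w.r.t. the pseudo-metric 𝔡. Then the kinky inference predictor with inflated metric 𝔡'(x,x') := 𝔡(x,x') satisfies the bound |p(x) − f(x)| ≤ min_i 𝔡(x, s_i) + ē for all x ∈ X. -/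
theorem kinky_inference_noisy_error_bound {X : Type*} {ι : Type*} [Fintype ι] [Nonempty ι]
    (d : X → X → ℝ) (hd0 : ∀ x y, 0 ≤ d x y) (hdsymm : ∀ x y, d x y = d y x)
    (hdtri : ∀ x y z, d x z ≤ d x y + d y z) (hdrefl : ∀ x, d x x = 0)
    (f : X → ℝ) (hf : ∀ x x', |f x - f x'| ≤ d x x')
    (s : ι → X) (y e : ι → ℝ) (ebar : ℝ) (hebar : 0 ≤ ebar)
    (hy : ∀ i, y i = f (s i) + e i) (he : ∀ i, |e i| ≤ ebar) :
    ∀ x : X,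
      |((⨅ i, (y i + d x (s i))) + (⨆ i, (y i - d x (s i)))) / 2 - f x| ≤
        (⨅ i, d x (s i)) + ebar := by
  intro x
  have hbb : ∀ g : ι → ℝ, BddBelow (Set.range g) := fun g => (Set.finite_range g).bddBelow
  have hba : ∀ g : ι → ℝ, BddAbove (Set.range g) := fun g => (Set.finite_range g).bddAbove
  set u := ⨅ i, (y i + d x (s i)) with hu
  set l := ⨆ i, (y i - d x (s i)) with hl
  set m := ⨅ i, d x (s i) with hm
  have h1 : f x - ebar ≤ u := le_ciInf fun i => by
    have h := (abs_le.mp (hf x (s i))).2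
    have h' := (abs_le.mp (he i)).1
    rw [hy i]; linarith
  have h2 : l ≤ f x + ebar := ciSup_le fun i => by
    have h := (abs_le.mp (hf x (s i))).1
    have h' := (abs_le.mp (he i)).2
    rw [hy i]; linarith
  have h3 : ∀ i, u ≤ f x + 2 * d x (s i) + ebar := fun i => by
    refine (ciInf_le (hbb _) i).trans ?_
    have h := (abs_le.mp (hf x (s i))).1
    have h' := (abs_le.mp (he i)).2
    rw [hy i]; linarith
  have h4 : ∀ i, f x - 2 * d x (s i) - ebar ≤ l := fun i => by
    refine le_trans ?_ (le_ciSup (hba _) i)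
    have h := (abs_le.mp (hf x (s i))).2
    have h' := (abs_le.mp (he i)).1
    rw [hy i]; linarith
  have h5 : (u - f x - ebar) / 2 ≤ m := le_ciInf fun i => by have := h3 i; linarith
  have h6 : (f x - l - ebar) / 2 ≤ m := le_ciInf fun i => by have := h4 i; linarith
  rw [abs_le]
  constructor <;> linarith
end
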